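/- Let g : I → ℝ³ be a smooth unit speed space-like curve on H² (⟨g,g⟩ = −1, ⟨g',g'⟩ = 1) with Sabban frame {g, t, s} and geodesic curvature κ_g, and assume κ_g(v)² > 1 and tanh(ξ₂)·κ_g(v) < 1 for all v. Let a > 0, ξ₂ ∈ ℝ be constants and γ(v) = a·∫₀ᵛ g(t)dt + a·tanh(ξ₂)·∫₀ᵛ g(t) × g'(t) dt, with κ and τ given by κ = ‖γ' × γ''‖ / (−⟨γ', γ'⟩)^{3/2} and τ = det(γ', γ'', γ''') / ‖γ' × γ''‖². Define T(v) = γ'(v)/‖γ'(v)‖, N(v) = t(v), B(v) = T(v) × N(v), and the Darboux vector D(v) = τ(v)·T(v) + κ(v)·B(v). Then D(v) is time-like and non-zero, and D(v)/‖D(v)‖ = (κ_g(v)·g(v) + s(v))/√(κ_g(v)² − 1) = h_g(v); that is, the hyperbolic Darboux indicatrix of γ equals the hyperbolic evolute of g. -/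

import Mathlib

noncomputable section

open Real

/-- The Lorentzian (Minkowski) inner product on ℝ³: ⟨x,y⟩ = x₁y₁ + x₂y₂ − x₃y₃. -/
def mink (x y : Fin 3 → ℝ) : ℝ := x 0 * y 0 + x 1 * y 1 - x 2 * y 2

/-- The Lorentzian cross product on ℝ³:
x × y = (x₂y₃ − x₃y₂, x₃y₁ − x₁y₃, x₂y₁ − x₁y₂). -/
def mcross (x y : Fin 3 → ℝ) : Fin 3 → ℝ :=
  ![x 1 * y 2 - x 2 * y 1, x 2 * y 0 - x 0 * y 2, x 1 * y 0 - x 0 * y 1]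

/-- Determinant of three vectors in ℝ³ (as the rows of a 3×3 matrix). -/
def mdet (x y z : Fin 3 → ℝ) : ℝ := Matrix.det (Matrix.of ![x, y, z])

/-- The pseudo norm ‖x‖ = √|⟨x,x⟩|. -/
def mnorm (x : Fin 3 → ℝ) : ℝ := Real.sqrt |mink x x|

/- ### Auxiliary algebraic lemmas -/

lemma mcross_apply0 (x y : Fin 3 → ℝ) : mcross x y 0 = x 1 * y 2 - x 2 * y 1 := rfl
lemma mcross_apply1 (x y : Fin 3 → ℝ) : mcross x y 1 = x 2 * y 0 - x 0 * y 2 := rfl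
lemma mcross_apply2 (x y : Fin 3 → ℝ) : mcross x y 2 = x 1 * y 0 - x 0 * y 1 := rfl

lemma mdet_eq (x y z : Fin 3 → ℝ) : mdet x y z = mink (mcross x y) z := by
  simp [mdet, Matrix.det_fin_three, mink, mcross_apply0, mcross_apply1, mcross_apply2]; ring

lemma mink_comm (x y : Fin 3 → ℝ) : mink x y = mink y x := by simp [mink]; ring

lemma lagrange (a b c d : Fin 3 → ℝ) :
    mink (mcross a b) (mcross c d) = mink a d * mink b c - mink a c * mink b d := by
  simp [mink, mcross_apply0, mcross_apply1, mcross_apply2]; ring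

lemma triple (a b c : Fin 3 → ℝ) :
    mcross a (mcross b c) = mink a b • c - mink a c • b := by
  funext i; fin_cases i <;>
    simp [mink, mcross_apply0, mcross_apply1, mcross_apply2, mcross] <;> ring

lemma mcross_anti (x y : Fin 3 → ℝ) : mcross x y = -mcross y x := by
  funext i; fin_cases i <;> simp [mcross] <;> ring

lemma mcross_self (x : Fin 3 → ℝ) : mcross x x = 0 := by
  funext i; fin_cases i <;> simp [mcross] <;> ring

lemma mink_mcross_left (x y : Fin 3 → ℝ) : mink (mcross x y) x = 0 := by
  simp [mink, mcross_apply0, mcross_apply1, mcross_apply2]; ring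

lemma mink_mcross_right (x y : Fin 3 → ℝ) : mink (mcross x y) y = 0 := by
  simp [mink, mcross_apply0, mcross_apply1, mcross_apply2]; ring

lemma mink_add_right (x y z : Fin 3 → ℝ) : mink x (y + z) = mink x y + mink x z := by
  simp [mink]; ring
lemma mink_sub_right (x y z : Fin 3 → ℝ) : mink x (y - z) = mink x y - mink x z := by
  simp [mink]; ring
lemma mink_smul_right (c : ℝ) (x y : Fin 3 → ℝ) : mink x (c • y) = c * mink x y := by
  simp [mink]; ring
lemma mink_add_left (x y z : Fin 3 → ℝ) : mink (x + y) z = mink x z + mink y z := by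
  simp [mink]; ring
lemma mink_sub_left (x y z : Fin 3 → ℝ) : mink (x - y) z = mink x z - mink y z := by
  simp [mink]; ring
lemma mink_smul_left (c : ℝ) (x y : Fin 3 → ℝ) : mink (c • x) y = c * mink x y := by
  simp [mink]; ring
lemma mink_neg_right (x y : Fin 3 → ℝ) : mink x (-y) = -mink x y := by simp [mink]; ring
lemma mink_neg_left (x y : Fin 3 → ℝ) : mink (-x) y = -mink x y := by simp [mink]; ring
lemma mcross_add_left (x y z : Fin 3 → ℝ) : mcross (x + y) z = mcross x z + mcross y z := by
  funext i; fin_cases i <;> simp [mcross] <;> ring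
lemma mcross_add_right (x y z : Fin 3 → ℝ) : mcross x (y + z) = mcross x y + mcross x z := by
  funext i; fin_cases i <;> simp [mcross] <;> ring
lemma mcross_sub_right (x y z : Fin 3 → ℝ) : mcross x (y - z) = mcross x y - mcross x z := by
  funext i; fin_cases i <;> simp [mcross] <;> ring
lemma mcross_smul_left (c : ℝ) (x y : Fin 3 → ℝ) : mcross (c • x) y = c • mcross x y := by
  funext i; fin_cases i <;> simp [mcross] <;> ring
lemma mcross_smul_right (c : ℝ) (x y : Fin 3 → ℝ) : mcross x (c • y) = c • mcross x y := by
  funext i; fin_cases i <;> simp [mcross] <;> ring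
lemma mcross_zero_right (x : Fin 3 → ℝ) : mcross x 0 = 0 := by
  funext i; fin_cases i <;> simp [mcross]

/-- If `z` is `mink`-orthogonal to `p`, `q` and `p × q`, and `p × q` has unit pseudo-norm,
then `z = 0`. -/
lemma span0 {p q z : Fin 3 → ℝ} (hss : mink (mcross p q) (mcross p q) = 1)
    (h1 : mink p z = 0) (h2 : mink q z = 0) (h3 : mink (mcross p q) z = 0) : z = 0 := by
  set s := mcross p q with hs
  have hsz : mcross s z = 0 := by
    rw [hs, mcross_anti (mcross p q) z, triple]
    rw [mink_comm z p, mink_comm z q, h1, h2]; simp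
  have htr := triple s s z
  rw [hsz, mcross_zero_right, hss, h3] at htr
  simpa using htr.symm

/- ### Auxiliary calculus lemmas -/

lemma hasDerivAt_mink {f h : ℝ → Fin 3 → ℝ} {f' h' : Fin 3 → ℝ} {v : ℝ}
    (hf : HasDerivAt f f' v) (hh : HasDerivAt h h' v) :
    HasDerivAt (fun w => mink (f w) (h w)) (mink f' (h v) + mink (f v) h') v := by
  have hfi := hasDerivAt_pi.mp hf
  have hhi := hasDerivAt_pi.mp hh
  have key : HasDerivAt (fun w => f w 0 * h w 0 + f w 1 * h w 1 - f w 2 * h w 2)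
      ((f' 0 * h v 0 + f v 0 * h' 0) + (f' 1 * h v 1 + f v 1 * h' 1)
        - (f' 2 * h v 2 + f v 2 * h' 2)) v :=
    (((hfi 0).mul (hhi 0)).add ((hfi 1).mul (hhi 1))).sub ((hfi 2).mul (hhi 2))
  refine key.congr_deriv ?_
  simp [mink]; ring

lemma hasDerivAt_mcross {f h : ℝ → Fin 3 → ℝ} {f' h' : Fin 3 → ℝ} {v : ℝ}
    (hf : HasDerivAt f f' v) (hh : HasDerivAt h h' v) :
    HasDerivAt (fun w => mcross (f w) (h w)) (mcross f' (h v) + mcross (f v) h') v := by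
  have hfi := hasDerivAt_pi.mp hf
  have hhi := hasDerivAt_pi.mp hh
  rw [hasDerivAt_pi]
  intro i
  fin_cases i
  · have key : HasDerivAt (fun w => f w 1 * h w 2 - f w 2 * h w 1)
        ((f' 1 * h v 2 + f v 1 * h' 2) - (f' 2 * h v 1 + f v 2 * h' 1)) v :=
      ((hfi 1).mul (hhi 2)).sub ((hfi 2).mul (hhi 1))
    refine key.congr_deriv ?_; symm
    show mcross f' (h v) 0 + mcross (f v) h' 0 = _
    simp [mcross]; ring
  · have key : HasDerivAt (fun w => f w 2 * h w 0 - f w 0 * h w 2)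
        ((f' 2 * h v 0 + f v 2 * h' 0) - (f' 0 * h v 2 + f v 0 * h' 2)) v :=
      ((hfi 2).mul (hhi 0)).sub ((hfi 0).mul (hhi 2))
    refine key.congr_deriv ?_; symm
    show mcross f' (h v) 1 + mcross (f v) h' 1 = _
    simp [mcross]; ring
  · have key : HasDerivAt (fun w => f w 1 * h w 0 - f w 0 * h w 1)
        ((f' 1 * h v 0 + f v 1 * h' 0) - (f' 0 * h v 1 + f v 0 * h' 1)) v :=
      ((hfi 1).mul (hhi 0)).sub ((hfi 0).mul (hhi 1))
    refine key.congr_deriv ?_; symm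
    show mcross f' (h v) 2 + mcross (f v) h' 2 = _
    simp [mcross]; ring

lemma main_algebra (A t₀ kk : ℝ) (hA : 0 < A) (ht2 : t₀^2 < 1) (hc : t₀ * kk < 1)
    (hk2 : 1 < kk^2)
    (p q r u s₀ gp gpp gppp : Fin 3 → ℝ) (hs₀ : s₀ = mcross p q)
    (Cpp : mink p p = -1) (Cqq : mink q q = 1) (Cpq : mink p q = 0)
    (Cpr : mink p r = -1) (Cqr : mink q r = 0) (Cpu : mink p u = 0)
    (Cru : mink r r + mink q u = 0)
    (hk : kk = mdet p q r)
    (hgp : gp = A • p + (A * t₀) • mcross p q)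
    (hgpp : gpp = A • q + (A * t₀) • mcross p r)
    (hgppp : gppp = A • r + (A * t₀) • (mcross q r + mcross p u))
    (κv τv : ℝ)
    (hκv : κv = mnorm (mcross gp gpp) / (-(mink gp gp)) ^ (3/2:ℝ))
    (hτv : τv = mdet gp gpp gppp / (mnorm (mcross gp gpp))^2)
    (Tv Bv Dv : Fin 3 → ℝ)
    (hTv : Tv = (mnorm gp)⁻¹ • gp)
    (hBv : Bv = mcross Tv q)
    (hDv : Dv = τv • Tv + κv • Bv) :
    mink Dv Dv < 0 ∧ Dv ≠ 0 ∧
      (mnorm Dv)⁻¹ • Dv = (Real.sqrt (kk^2-1))⁻¹ • (kk • p + mcross p q) := by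
  -- derived scalar products
  have Cqp : mink q p = 0 := by rw [mink_comm]; exact Cpq
  have Css : mink s₀ s₀ = 1 := by rw [hs₀, lagrange, Cpq, Cpp, Cqq]; ring
  have Csp : mink s₀ p = 0 := by rw [hs₀]; exact mink_mcross_left p q
  have Cps : mink p s₀ = 0 := by rw [mink_comm]; exact Csp
  have Csq : mink s₀ q = 0 := by rw [hs₀]; exact mink_mcross_right p q
  have Cqs : mink q s₀ = 0 := by rw [mink_comm]; exact Csq
  have Csr : mink s₀ r = kk := by rw [hs₀, ← mdet_eq, ← hk]
  have Crp : mink r p = -1 := by rw [mink_comm]; exact Cpr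
  have Crq : mink r q = 0 := by rw [mink_comm]; exact Cqr
  -- r in the Sabban frame
  have hrf : r = p + kk • s₀ := by
    have h1 : mink p (r - (p + kk • s₀)) = 0 := by
      rw [mink_sub_right, mink_add_right, mink_smul_right, Cpr, Cpp, Cps]; ring
    have h2 : mink q (r - (p + kk • s₀)) = 0 := by
      rw [mink_sub_right, mink_add_right, mink_smul_right, Cqr, Cqp, Cqs]; ring
    have h3 : mink (mcross p q) (r - (p + kk • s₀)) = 0 := by
      rw [← hs₀, mink_sub_right, mink_add_right, mink_smul_right, Csr, Csp, Css]; ring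
    have hz := span0 (by rw [← hs₀]; exact Css) h1 h2 h3
    have := sub_eq_zero.mp hz
    exact this
  have hrr : mink r r = kk^2 - 1 := by
    rw [hrf]
    simp only [mink_add_left, mink_add_right, mink_smul_left, mink_smul_right,
      Cpp, Cps, Csp, Css]
    ring
  have Cqu : mink q u = 1 - kk^2 := by rw [hrr] at Cru; linarith
  -- u in the Sabban frame
  obtain ⟨w₀, hw₀⟩ : ∃ w₀, mink s₀ u = w₀ := ⟨_, rfl⟩
  have huf : u = (1 - kk^2) • q + w₀ • s₀ := by
    have h1 : mink p (u - ((1 - kk^2) • q + w₀ • s₀)) = 0 := by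
      rw [mink_sub_right, mink_add_right, mink_smul_right, mink_smul_right,
        Cpu, Cpq, Cps]; ring
    have h2 : mink q (u - ((1 - kk^2) • q + w₀ • s₀)) = 0 := by
      rw [mink_sub_right, mink_add_right, mink_smul_right, mink_smul_right,
        Cqu, Cqq, Cqs]; ring
    have h3 : mink (mcross p q) (u - ((1 - kk^2) • q + w₀ • s₀)) = 0 := by
      rw [← hs₀, mink_sub_right, mink_add_right, mink_smul_right, mink_smul_right,
        hw₀, Csq, Css]; ring
    exact sub_eq_zero.mp (span0 (by rw [← hs₀]; exact Css) h1 h2 h3)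
  -- cross product atoms
  have hpxs : mcross p s₀ = -q := by
    rw [hs₀, triple, Cpp, Cpq]; funext i; simp
  have hqxs : mcross q s₀ = -p := by
    rw [hs₀, triple, Cqp, Cqq]; funext i; simp
  have hsxq : mcross s₀ q = p := by
    rw [mcross_anti, hqxs]; funext i; simp
  have hqxp : mcross q p = -s₀ := by
    rw [mcross_anti, hs₀]
  -- positivity
  have hc' : (0:ℝ) < 1 - t₀ * kk := by linarith
  have hm2 : (0:ℝ) < 1 - t₀^2 := by linarith
  set m : ℝ := Real.sqrt (1 - t₀^2) with hmdef
  have hm : 0 < m := Real.sqrt_pos.mpr hm2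
  have hmsq : m^2 = 1 - t₀^2 := Real.sq_sqrt hm2.le
  -- the derivatives of γ in the Sabban frame
  have hgp' : gp = A • p + (A * t₀) • s₀ := by rw [hgp, hs₀]
  have hgpp' : gpp = (A * (1 - t₀ * kk)) • q := by
    rw [hgpp, hrf, mcross_add_right, mcross_smul_right, mcross_self, hpxs]
    funext i
    simp only [Pi.add_apply, Pi.smul_apply, Pi.neg_apply, Pi.zero_apply, smul_eq_mul,
      zero_add, mul_neg]
    ring
  have hX : mcross gp gpp = (A^2 * (1 - t₀ * kk)) • (s₀ + t₀ • p) := by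
    rw [hgp', hgpp', mcross_smul_right, mcross_add_left, mcross_smul_left,
      mcross_smul_left, hsxq, ← hs₀]
    funext i
    simp only [Pi.add_apply, Pi.smul_apply, smul_eq_mul]
    ring
  -- key scalar quantities
  have Sgp : mink gp gp = -(A^2 * (1 - t₀^2)) := by
    rw [hgp']
    simp only [mink_add_left, mink_add_right, mink_smul_left, mink_smul_right,
      Cpp, Cps, Csp, Css]
    ring
  have SX : mink (mcross gp gpp) (mcross gp gpp)
      = (A^2 * (1 - t₀ * kk))^2 * (1 - t₀^2) := by
    rw [hX]
    simp only [mink_add_left, mink_add_right, mink_smul_left, mink_smul_right,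
      Cpp, Cps, Csp, Css]
    ring
  have NX : mnorm (mcross gp gpp) = A^2 * (1 - t₀ * kk) * m := by
    rw [mnorm, SX, abs_of_nonneg (by positivity)]
    rw [show (A^2 * (1 - t₀ * kk))^2 * (1 - t₀^2) = (A^2 * (1 - t₀ * kk) * m)^2 by
      rw [mul_pow (A^2 * (1 - t₀ * kk)) m 2, hmsq]]
    exact Real.sqrt_sq (by positivity)
  have Ngp : mnorm gp = A * m := by
    rw [mnorm, Sgp, abs_neg, abs_of_nonneg (by positivity)]
    rw [show A^2 * (1 - t₀^2) = (A * m)^2 by rw [mul_pow A m 2, hmsq]]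
    exact Real.sqrt_sq (by positivity)
  have hpow : (-(mink gp gp)) ^ (3/2:ℝ) = (A * m)^3 := by
    rw [Sgp, neg_neg, show A^2 * (1 - t₀^2) = (A * m)^2 by rw [mul_pow A m 2, hmsq]]
    rw [← Real.rpow_natCast (A * m) 2, ← Real.rpow_mul (by positivity)]
    norm_num
  have hκ : κv = (1 - t₀ * kk) / (A * (1 - t₀^2)) := by
    rw [hκv, NX, hpow, ← hmsq]
    field_simp
  -- third derivative and torsion
  have hqxr : mcross q r = -s₀ - kk • p := by
    rw [hrf, mcross_add_right, mcross_smul_right, hqxp, hqxs]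
    funext i
    simp only [Pi.add_apply, Pi.sub_apply, Pi.smul_apply, Pi.neg_apply, smul_eq_mul]
    ring
  have hpxu : mcross p u = (1 - kk^2) • s₀ - w₀ • q := by
    rw [huf, mcross_add_right, mcross_smul_right, mcross_smul_right, ← hs₀, hpxs]
    funext i
    simp only [Pi.add_apply, Pi.sub_apply, Pi.smul_apply, Pi.neg_apply, smul_eq_mul]
    ring
  have SD : mdet gp gpp gppp = A^3 * (1 - t₀ * kk)^2 * (kk - t₀) := by
    rw [mdet_eq, hX, hgppp, hqxr, hpxu, hrf]
    simp only [mink_add_left, mink_add_right, mink_sub_left, mink_sub_right,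
      mink_smul_left, mink_smul_right, mink_neg_left, mink_neg_right,
      Cpp, Cqq, Cpq, Cqp, Cps, Csp, Cqs, Csq, Css]
    ring
  have hτ : τv = (kk - t₀) / (A * (1 - t₀^2)) := by
    rw [hτv, SD, NX, ← hmsq]
    field_simp
  -- B in the Sabban frame
  have hBv' : Bv = (A * m)⁻¹ • (A • s₀ + (A * t₀) • p) := by
    rw [hBv, hTv, Ngp, hgp', mcross_smul_left, mcross_add_left, mcross_smul_left,
      mcross_smul_left, hsxq, ← hs₀]
  -- the Darboux vector
  have hD2 : (A * m) • Dv = kk • p + s₀ := by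
    rw [hDv, hκ, hτ, hTv, Ngp, hgp', hBv']
    funext i
    simp only [Pi.add_apply, Pi.smul_apply, smul_eq_mul]
    have hAm : A * m ≠ 0 := by positivity
    field_simp
    ring
  have hDf : Dv = (A * m)⁻¹ • (kk • p + s₀) := by
    rw [← hD2, smul_smul, inv_mul_cancel₀ (by positivity : (A*m) ≠ 0), one_smul]
  have SDD : mink Dv Dv = (1 - kk^2) / (A * m)^2 := by
    rw [hDf]
    simp only [mink_smul_left, mink_smul_right, mink_add_left, mink_add_right,
      Cpp, Cps, Csp, Css]
    field_simp
    ring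
  have hneg : mink Dv Dv < 0 := by
    rw [SDD]
    apply div_neg_of_neg_of_pos (by linarith) (by positivity)
  refine ⟨hneg, ?_, ?_⟩
  · intro h
    rw [h] at hneg
    simp [mink] at hneg
  · have hk1 : (0:ℝ) < kk^2 - 1 := by linarith
    have NDv : mnorm Dv = Real.sqrt (kk^2 - 1) / (A * m) := by
      rw [mnorm, SDD, abs_of_nonpos (by
        apply div_nonpos_of_nonpos_of_nonneg (by linarith) (by positivity))]
      rw [show -((1 - kk^2) / (A * m)^2) = (Real.sqrt (kk^2-1) / (A * m))^2 by
        rw [div_pow, Real.sq_sqrt hk1.le]; ring]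
      exact Real.sqrt_sq (by positivity)
    rw [NDv, hDf, ← hs₀]
    funext i
    simp only [Pi.smul_apply, Pi.add_apply, smul_eq_mul]
    have hsq : Real.sqrt (kk^2 - 1) ≠ 0 := by positivity
    have hAm : A * m ≠ 0 := by positivity
    field_simp

/-- the hyperbolic Darboux indicatrix D/‖D‖ of the time-like Bertrand
curve γ corresponding to g equals the hyperbolic evolute
h_g(v) = (κ_g(v)·g(v) + s(v))/√(κ_g(v)² − 1), where D = τ·T + κ·B is the Darboux
vector; moreover D is time-like and non-zero. -/
theorem hyperbolic_darboux_indicatrix_eq_evolute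
    (a b : ℝ) (I : Set ℝ) (hI : I = Set.Ioo a b) (h0 : (0:ℝ) ∈ I)
    (g : ℝ → Fin 3 → ℝ) (hg : ContDiff ℝ (⊤ : ℕ∞) g)
    (hg1 : ∀ v ∈ I, mink (g v) (g v) = -1)
    (hg2 : ∀ v ∈ I, mink (deriv g v) (deriv g v) = 1)
    (κg : ℝ → ℝ) (hκg : ∀ v, κg v = mdet (g v) (deriv g v) (deriv (deriv g) v))
    (A ξ : ℝ) (hA : 0 < A)
    (hξκ : ∀ v ∈ I, Real.tanh ξ * κg v < 1)
    (γ : ℝ → Fin 3 → ℝ)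
    (hγ : ∀ v, γ v = A • (∫ w in (0:ℝ)..v, g w) +
        (A * Real.tanh ξ) • (∫ w in (0:ℝ)..v, mcross (g w) (deriv g w)))
    (κ τ : ℝ → ℝ)
    (hκdef : ∀ v, κ v = mnorm (mcross (deriv γ v) (deriv (deriv γ) v)) /
        (-(mink (deriv γ v) (deriv γ v))) ^ (3/2 : ℝ))
    (hτdef : ∀ v, τ v =
        mdet (deriv γ v) (deriv (deriv γ) v) (deriv (deriv (deriv γ)) v) /
        (mnorm (mcross (deriv γ v) (deriv (deriv γ) v))) ^ 2)
    (hκg2 : ∀ v ∈ I, κg v ^ 2 > 1)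
    (s : ℝ → Fin 3 → ℝ) (hs : ∀ v, s v = mcross (g v) (deriv g v))
    (T N B D : ℝ → Fin 3 → ℝ)
    (hT : ∀ v, T v = (mnorm (deriv γ v))⁻¹ • deriv γ v)
    (hN : ∀ v, N v = deriv g v)
    (hB : ∀ v, B v = mcross (T v) (N v))
    (hD : ∀ v, D v = τ v • T v + κ v • B v) :
    ∀ v ∈ I,
      mink (D v) (D v) < 0 ∧ D v ≠ 0 ∧
      (mnorm (D v))⁻¹ • D v =
        (Real.sqrt (κg v ^ 2 - 1))⁻¹ • (κg v • g v + s v) := by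
  intro v hv
  -- smoothness infrastructure
  have hg0 : ContDiff ℝ (↑(⊤:ℕ∞)) g := hg.of_le (by simp)
  have hg1c : ContDiff ℝ (↑(⊤:ℕ∞)) (deriv g) := (contDiff_infty_iff_deriv.mp hg0).2
  have hg2c : ContDiff ℝ (↑(⊤:ℕ∞)) (deriv (deriv g)) := (contDiff_infty_iff_deriv.mp hg1c).2
  have hgd : ∀ w, HasDerivAt g (deriv g w) w := fun w =>
    ((hg0.differentiable (by simp)) w).hasDerivAt
  have hgd1 : ∀ w, HasDerivAt (deriv g) (deriv (deriv g) w) w := fun w =>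
    ((hg1c.differentiable (by simp)) w).hasDerivAt
  have hgd2 : ∀ w, HasDerivAt (deriv (deriv g)) (deriv (deriv (deriv g)) w) w := fun w =>
    ((hg2c.differentiable (by simp)) w).hasDerivAt
  -- derivatives of γ
  have hcc : Continuous fun w => mcross (g w) (deriv g w) := by
    have h1 := hg0.continuous
    have h2 := hg1c.continuous
    apply continuous_pi; intro i; fin_cases i
    · show Continuous fun w => g w 1 * deriv g w 2 - g w 2 * deriv g w 1
      fun_prop
    · show Continuous fun w => g w 2 * deriv g w 0 - g w 0 * deriv g w 2
      fun_prop
    · show Continuous fun w => g w 1 * deriv g w 0 - g w 0 * deriv g w 1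
      fun_prop
  have hdγ : deriv γ = fun w => A • g w + (A * Real.tanh ξ) • mcross (g w) (deriv g w) := by
    funext w
    have h1 : HasDerivAt (fun z => ∫ t in (0:ℝ)..z, g t) (g w) w :=
      (hg0.continuous.integral_hasStrictDerivAt 0 w).hasDerivAt
    have h2 : HasDerivAt (fun z => ∫ t in (0:ℝ)..z, mcross (g t) (deriv g t))
        (mcross (g w) (deriv g w)) w := (hcc.integral_hasStrictDerivAt 0 w).hasDerivAt
    have h3 := (h1.const_smul A).add (h2.const_smul (A * Real.tanh ξ))
    have hfe : γ = fun z => A • (∫ t in (0:ℝ)..z, g t)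
        + (A * Real.tanh ξ) • (∫ t in (0:ℝ)..z, mcross (g t) (deriv g t)) := funext hγ
    rw [hfe]
    exact h3.deriv
  have hdγw : ∀ w, HasDerivAt (deriv γ)
      (A • deriv g w + (A * Real.tanh ξ) • mcross (g w) (deriv (deriv g) w)) w := by
    intro w
    rw [hdγ]
    have h2 := (hasDerivAt_mcross (hgd w) (hgd1 w)).const_smul (A * Real.tanh ξ)
    have h3 := ((hgd w).const_smul A).add h2
    rw [mcross_self, zero_add] at h3
    exact h3
  have hdγ2 : deriv (deriv γ) = fun w =>
      A • deriv g w + (A * Real.tanh ξ) • mcross (g w) (deriv (deriv g) w) :=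
    funext fun w => (hdγw w).deriv
  have hγ3 : HasDerivAt (deriv (deriv γ))
      (A • deriv (deriv g) v + (A * Real.tanh ξ) •
        (mcross (deriv g v) (deriv (deriv g) v)
          + mcross (g v) (deriv (deriv (deriv g)) v))) v := by
    rw [hdγ2]
    exact ((hgd1 v).const_smul A).add
      ((hasDerivAt_mcross (hgd v) (hgd2 v)).const_smul (A * Real.tanh ξ))
  have hd3 := hγ3.deriv
  -- scalar constraints from differentiating the relations on I
  have hIopen : IsOpen I := by rw [hI]; exact isOpen_Ioo
  have derivz : ∀ {F : ℝ → ℝ} {F' c : ℝ} {w : ℝ}, w ∈ I → (∀ z ∈ I, F z = c) →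
      HasDerivAt F F' w → F' = 0 := by
    intro F F' c w hw hFc hF
    have he : F =ᶠ[nhds w] fun _ => c := Filter.eventuallyEq_of_mem (hIopen.mem_nhds hw) hFc
    have hd := he.deriv_eq
    rw [hF.deriv, deriv_const] at hd
    exact hd
  have cpq : ∀ w ∈ I, mink (g w) (deriv g w) = 0 := by
    intro w hw
    have h0 := derivz hw hg1 (hasDerivAt_mink (hgd w) (hgd w))
    rw [mink_comm (deriv g w) (g w)] at h0; linarith
  have cpr : ∀ w ∈ I, mink (g w) (deriv (deriv g) w) = -1 := by
    intro w hw
    have h0 := derivz hw cpq (hasDerivAt_mink (hgd w) (hgd1 w))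
    rw [hg2 w hw] at h0; linarith
  have cqr : ∀ w ∈ I, mink (deriv g w) (deriv (deriv g) w) = 0 := by
    intro w hw
    have h0 := derivz hw hg2 (hasDerivAt_mink (hgd1 w) (hgd1 w))
    rw [mink_comm (deriv (deriv g) w) (deriv g w)] at h0; linarith
  have cpu : mink (g v) (deriv (deriv (deriv g)) v) = 0 := by
    have h0 := derivz hv cpr (hasDerivAt_mink (hgd v) (hgd2 v))
    rw [cqr v hv] at h0; linarith
  have cru : mink (deriv (deriv g) v) (deriv (deriv g) v)
      + mink (deriv g v) (deriv (deriv (deriv g)) v) = 0 :=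
    derivz hv cqr (hasDerivAt_mink (hgd1 v) (hgd2 v))
  -- tanh bound
  have ht2 : Real.tanh ξ ^ 2 < 1 := by
    rw [Real.tanh_eq_sinh_div_cosh, div_pow, div_lt_one (by positivity)]
    nlinarith [Real.cosh_sq ξ, Real.cosh_pos ξ]
  -- assemble
  have key := main_algebra A (Real.tanh ξ) (κg v) hA ht2 (hξκ v hv) (hκg2 v hv)
    (g v) (deriv g v) (deriv (deriv g) v) (deriv (deriv (deriv g)) v)
    (mcross (g v) (deriv g v)) (deriv γ v) (deriv (deriv γ) v) (deriv (deriv (deriv γ)) v)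
    rfl (hg1 v hv) (hg2 v hv) (cpq v hv) (cpr v hv) (cqr v hv) cpu cru (hκg v)
    (congrFun hdγ v) (congrFun hdγ2 v) hd3
    (κ v) (τ v) (hκdef v) (hτdef v)
    (T v) (B v) (D v) (hT v) (by rw [hB v, hN v]) (hD v)
  rw [hs v]
  exact key
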